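/- Let p be a prime, G a subgroup of 𝔽_p^*, g, h : G → 𝔽_p^* arbitrary functions, f(x,y) = g(x)(h(x) + y), and m = μ(g·h) where (g·h)(x) = g(x)h(x). Let θ and K be positive reals and let A ⊆ G be a set such that |A·A| ≤ K·|A|^{1+θ}. Then |f(A,A)| ≥ (1/(8K)) · min( |A|^{3−θ} / (p·m²), p·|A|^{−θ} / m ). -/

import Mathlib

/-!
Compare the point set `P = A·A × f(A,A)` with the lines `v = (g x / a) u + g x h x`, `x, a ∈ A`.
Each such line contains the `|A|` points `(a y, f(x, y))`, `y ∈ A`, of `P`, and there are at least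
`|A|² / m` distinct lines: the intercept `g x h x` leaves at most `m` choices of `x`, and then
the slope determines `a`. The incidence bound `I(P, L) ≤ |P||L|/p + √(p|P||L|)` for non-vertical
lines of `𝔽_p²`, which follows from the second moment of the line counts and Cauchy–Schwarz,
therefore gives `p|A| ≤ 2|A·A||f(A,A)|` or `|A|⁴ ≤ 4pm|A·A||f(A,A)|`; the hypothesis
`|A·A| ≤ K|A|^{1+θ}` turns either case into the bound.
-/

open Finset Pointwise

section Incidences

variable {F : Type*} [Field F] [Fintype F] [DecidableEq F]

/-- `ℓ = (b, c)` encodes the non-vertical line `v = b * u + c`. -/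
def OnLine (ℓ q : F × F) : Prop := q.2 = ℓ.1 * q.1 + ℓ.2

instance (ℓ q : F × F) : Decidable (OnLine ℓ q) := inferInstanceAs (Decidable (_ = _))

lemma card_filter_onLine (q : F × F) : #{ℓ | OnLine ℓ q} = Fintype.card F := by
  have : ({ℓ | OnLine ℓ q} : Finset (F × F)) = univ.image fun b => (b, q.2 - b * q.1) := by
    ext ℓ
    rw [mem_filter_univ, OnLine]
    simp only [mem_image, mem_univ, true_and]
    constructor
    · intro h
      exact ⟨ℓ.1, Prod.ext rfl (by rw [h]; ring)⟩
    · rintro ⟨b, rfl⟩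
      ring
  rw [this, card_image_of_injective _ fun b b' hbb' => congrArg Prod.fst hbb', card_univ]

lemma card_filter_onLine_onLine_le_one {q q' : F × F} (hqq' : q ≠ q') :
    #{ℓ | OnLine ℓ q ∧ OnLine ℓ q'} ≤ 1 := by
  refine card_le_one.2 fun ℓ hℓ ℓ' hℓ' => ?_
  rw [mem_filter_univ] at hℓ hℓ'
  simp only [OnLine] at hℓ hℓ'
  have hx : q.1 - q'.1 ≠ 0 := by
    refine sub_ne_zero.2 fun hx => hqq' (Prod.ext hx ?_)
    rw [hℓ.1, hℓ.2, hx]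
  have hb : ℓ.1 = ℓ'.1 :=
    mul_right_cancel₀ hx <| by linear_combination hℓ'.1 - hℓ'.2 - hℓ.1 + hℓ.2
  exact Prod.ext hb (by linear_combination hℓ'.1 - hℓ.1 - q.1 * hb)

lemma sum_card_filter_onLine (P : Finset (F × F)) :
    ∑ ℓ, #{q ∈ P | OnLine ℓ q} = Fintype.card F * #P := by
  simpa [bipartiteAbove, bipartiteBelow, card_filter_onLine, mul_comm] using
    sum_card_bipartiteAbove_eq_sum_card_bipartiteBelow OnLine (s := univ) (t := P)

lemma sum_card_filter_onLine_sq_le (P : Finset (F × F)) :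
    ∑ ℓ, #{q ∈ P | OnLine ℓ q} ^ 2 ≤ Fintype.card F * #P + #P ^ 2 := by
  have hsq (ℓ : F × F) :
      #{q ∈ P | OnLine ℓ q} ^ 2 = #{x ∈ P ×ˢ P | OnLine ℓ x.1 ∧ OnLine ℓ x.2} := by
    rw [sq, ← card_product, filter_product]
  have hpair (x : (F × F) × (F × F)) :
      #{ℓ | OnLine ℓ x.1 ∧ OnLine ℓ x.2} ≤ (if x.1 = x.2 then Fintype.card F else 0) + 1 := by
    split_ifs with hx
    · simp [hx, card_filter_onLine]
    · simpa using card_filter_onLine_onLine_le_one hx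
  calc ∑ ℓ, #{q ∈ P | OnLine ℓ q} ^ 2
      = ∑ x ∈ P ×ˢ P, #{ℓ | OnLine ℓ x.1 ∧ OnLine ℓ x.2} := by
        simp_rw [hsq]
        exact sum_card_bipartiteAbove_eq_sum_card_bipartiteBelow
          (fun ℓ (x : (F × F) × (F × F)) => OnLine ℓ x.1 ∧ OnLine ℓ x.2)
    _ ≤ ∑ x ∈ P ×ˢ P, ((if x.1 = x.2 then Fintype.card F else 0) + 1) :=
        sum_le_sum fun x _ => hpair x
    _ = Fintype.card F * #P + #P ^ 2 := by
        rw [sum_add_distrib, sum_product]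
        simp [sum_ite_eq, sq, mul_comm]

lemma sum_sq_sub_card_filter_onLine_le (P : Finset (F × F)) :
    ∑ ℓ, ((#{q ∈ P | OnLine ℓ q} : ℝ) - #P / Fintype.card F) ^ 2
      ≤ Fintype.card F * #P := by
  have hq : (0 : ℝ) < Fintype.card F := by exact_mod_cast Fintype.card_pos
  have hsum : ∑ ℓ, (#{q ∈ P | OnLine ℓ q} : ℝ) = Fintype.card F * #P := by
    exact_mod_cast sum_card_filter_onLine P
  have hsum_sq : ∑ ℓ, (#{q ∈ P | OnLine ℓ q} : ℝ) ^ 2 ≤ Fintype.card F * #P + #P ^ 2 := by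
    exact_mod_cast sum_card_filter_onLine_sq_le P
  have hcard : (Fintype.card (F × F) : ℝ) = Fintype.card F ^ 2 := by
    rw [Fintype.card_prod]; push_cast; ring
  simp only [sub_sq, sum_add_distrib, sum_sub_distrib, ← sum_mul, ← mul_sum, sum_const,
    card_univ, nsmul_eq_mul, hsum, hcard]
  field_simp
  nlinarith

lemma sum_card_filter_onLine_le (P L : Finset (F × F)) :
    ∑ ℓ ∈ L, (#{q ∈ P | OnLine ℓ q} : ℝ)
      ≤ #P * #L / Fintype.card F + √(Fintype.card F * #P * #L) := by
  set c : ℝ := #P / Fintype.card F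
  have hdev : ∑ ℓ ∈ L, ((#{q ∈ P | OnLine ℓ q} : ℝ) - c) ≤ √(Fintype.card F * #P * #L) := by
    refine (le_abs_self _).trans (Real.abs_le_sqrt ?_)
    calc (∑ ℓ ∈ L, ((#{q ∈ P | OnLine ℓ q} : ℝ) - c)) ^ 2
        ≤ #L * ∑ ℓ ∈ L, ((#{q ∈ P | OnLine ℓ q} : ℝ) - c) ^ 2 :=
          sq_sum_le_card_mul_sum_sq (f := fun ℓ => (#{q ∈ P | OnLine ℓ q} : ℝ) - c)
      _ ≤ #L * ∑ ℓ, ((#{q ∈ P | OnLine ℓ q} : ℝ) - c) ^ 2 := by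
        gcongr
        exact subset_univ L
      _ ≤ #L * (Fintype.card F * #P) := by
        gcongr
        exact sum_sq_sub_card_filter_onLine_le P
      _ = Fintype.card F * #P * #L := by ring
  have : ∑ ℓ ∈ L, (#{q ∈ P | OnLine ℓ q} : ℝ)
      = ∑ ℓ ∈ L, ((#{q ∈ P | OnLine ℓ q} : ℝ) - c) + #L * c := by
    rw [sum_sub_distrib, sum_const, nsmul_eq_mul]; ring
  have hc : (#L : ℝ) * c = #P * #L / Fintype.card F := by ring
  linarith

end Incidences

section Lines

variable {F : Type*} [Field F] (g h : F → F)

def lineOf (x a : F) : F × F := (g x / a, g x * h x)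

lemma onLine_lineOf {x a : F} (ha : a ≠ 0) (y : F) :
    OnLine (lineOf g h x a) (a * y, g x * (h x + y)) := by
  simp only [OnLine, lineOf]
  field_simp
  ring

lemma card_le_card_filter_onLine_lineOf [DecidableEq F] {A : Finset F} (hA0 : 0 ∉ A)
    {x a : F} (hx : x ∈ A) (ha : a ∈ A) :
    #A ≤ #{q ∈ (A * A) ×ˢ image₂ (fun x y => g x * (h x + y)) A A |
      OnLine (lineOf g h x a) q} := by
  have ha0 : a ≠ 0 := ne_of_mem_of_not_mem ha hA0
  refine card_le_card_of_injOn (fun y => (a * y, g x * (h x + y))) (fun y hy => ?_)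
    fun y _ y' _ hyy' => mul_left_cancel₀ ha0 (congrArg Prod.fst hyy')
  simp only [mem_coe, mem_filter, mem_product]
  exact ⟨⟨mul_mem_mul ha hy, mem_image₂_of_mem hx hy⟩, onLine_lineOf g h ha0 y⟩

lemma card_sq_le_mul_card_image_lineOf [DecidableEq F] {A : Finset F}
    (hg : ∀ x ∈ A, g x ≠ 0) {m : ℕ} (hm : ∀ x ∈ A, #{y ∈ A | g y * h y = g x * h x} ≤ m) :
    #A ^ 2 ≤ m * #((A ×ˢ A).image fun xa => lineOf g h xa.1 xa.2) := by
  rw [sq, ← card_product]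
  refine card_le_mul_card_image _ m fun ℓ hℓ => ?_
  obtain ⟨⟨x₀, a₀⟩, hxa₀, rfl⟩ := mem_image.1 hℓ
  refine le_trans (card_le_card_of_injOn Prod.fst (fun xa hxa => ?_)
    fun xa hxa xa' hxa' hx => ?_) (hm x₀ (mem_product.1 hxa₀).1)
  · simp only [mem_coe, mem_filter, mem_product] at hxa ⊢
    exact ⟨hxa.1.1, congrArg Prod.snd hxa.2⟩
  · simp only [mem_coe, mem_filter, mem_product] at hxa hxa'
    have hslope := (congrArg Prod.fst hxa.2).trans (congrArg Prod.fst hxa'.2).symm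
    simp only [lineOf, hx, div_eq_mul_inv] at hslope
    exact Prod.ext hx (inv_injective (mul_left_cancel₀ (hg _ hxa'.1.1) hslope))

end Lines

lemma le_or_sq_le_of_le_div_add_sqrt {l a N q : ℝ} (hl : 0 < l) (ha : 0 ≤ a) (hN : 0 ≤ N)
    (hq : 0 < q) (h : l * a ≤ N * l / q + √(q * N * l)) :
    q * a ≤ 2 * N ∨ l * a ^ 2 ≤ 4 * q * N := by
  by_cases hmain : l * a / 2 ≤ N * l / q
  · left
    rw [div_le_div_iff₀ two_pos hq] at hmain
    nlinarith
  · right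
    have hsqrt : l * a / 2 ≤ √(q * N * l) := by linarith
    have := (Real.le_sqrt (by positivity) (by positivity)).1 hsqrt
    nlinarith

lemma card_image₂_dichotomy {F : Type*} [Field F] [Fintype F] [DecidableEq F] (g h : F → F)
    {A : Finset F} (hA : A.Nonempty) (hA0 : 0 ∉ A) (hg : ∀ x ∈ A, g x ≠ 0) {m : ℕ}
    (hm : ∀ x ∈ A, #{y ∈ A | g y * h y = g x * h x} ≤ m) :
    Fintype.card F * #A ≤ 2 * (#(A * A) * #(image₂ (fun x y => g x * (h x + y)) A A) : ℝ) ∨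
      (#A : ℝ) ^ 4 ≤
        4 * Fintype.card F * (#(A * A) * #(image₂ (fun x y => g x * (h x + y)) A A) : ℝ) * m := by
  set N : ℝ := #(A * A) * #(image₂ (fun x y => g x * (h x + y)) A A)
  set P := (A * A) ×ˢ image₂ (fun x y => g x * (h x + y)) A A
  set L := (A ×ˢ A).image fun xa => lineOf g h xa.1 xa.2
  have hL : (0 : ℝ) < #L := by simpa [L] using hA
  have hPN : (#P : ℝ) = N := by simp [P, N]
  have hlines : (#A : ℝ) ^ 2 ≤ m * #L := by
    exact_mod_cast card_sq_le_mul_card_image_lineOf g h hg hm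
  have hincidences : (#L : ℝ) * #A ≤ ∑ ℓ ∈ L, (#{q ∈ P | OnLine ℓ q} : ℝ) := by
    rw [← nsmul_eq_mul]
    refine card_nsmul_le_sum _ _ _ fun ℓ hℓ => ?_
    obtain ⟨⟨x, a⟩, hxa, rfl⟩ := mem_image.1 hℓ
    exact_mod_cast card_le_card_filter_onLine_lineOf g h hA0 (mem_product.1 hxa).1
      (mem_product.1 hxa).2
  have hvinh := hincidences.trans (sum_card_filter_onLine_le P L)
  rw [hPN] at hvinh
  refine (le_or_sq_le_of_le_div_add_sqrt hL (by positivity) (by positivity)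
    (by exact_mod_cast Fintype.card_pos) hvinh).imp_right fun h => ?_
  calc (#A : ℝ) ^ 4 = #A ^ 2 * #A ^ 2 := by ring
    _ ≤ (m : ℝ) * #L * #A ^ 2 := by gcongr
    _ = (m : ℝ) * (#L * #A ^ 2) := by ring
    _ ≤ (m : ℝ) * (4 * Fintype.card F * N) := by gcongr
    _ = 4 * Fintype.card F * N * m := by ring

lemma one_div_mul_min_le {a s f q m K θ : ℝ} (ha : 0 < a) (hq : 0 < q) (hm : 1 ≤ m)
    (hK : 0 < K) (hf : 0 ≤ f) (hs : s ≤ K * a ^ (1 + θ))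
    (h : q * a ≤ 2 * (s * f) ∨ a ^ 4 ≤ 4 * q * (s * f) * m) :
    1 / (8 * K) * min (a ^ (3 - θ) / (q * m ^ 2)) (q * a ^ (-θ) / m) ≤ f := by
  have haθ : 0 < a ^ (1 + θ) := Real.rpow_pos_of_pos ha _
  have hsf : s * f ≤ K * f * a ^ (1 + θ) := by nlinarith
  have hKf : 0 ≤ K * f := by positivity
  suffices min (a ^ (3 - θ) / (q * m ^ 2)) (q * a ^ (-θ) / m) * a ^ (1 + θ)
      ≤ 4 * (K * f) * a ^ (1 + θ) by
    rw [one_div_mul_eq_div, div_le_iff₀ (by positivity)]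
    nlinarith [le_of_mul_le_mul_right this haθ]
  rcases h with h | h
  · have hrpow : a ^ (-θ) * a ^ (1 + θ) = a := by
      rw [← Real.rpow_add ha]; simp
    calc min (a ^ (3 - θ) / (q * m ^ 2)) (q * a ^ (-θ) / m) * a ^ (1 + θ)
        ≤ q * a ^ (-θ) / m * a ^ (1 + θ) := by gcongr; exact min_le_right _ _
      _ = q * a / m := by rw [div_mul_eq_mul_div, mul_assoc, hrpow]
      _ ≤ q * a := div_le_self (by positivity) hm
      _ ≤ 4 * (K * f) * a ^ (1 + θ) := by nlinarith
  · have hrpow : a ^ (3 - θ) * a ^ (1 + θ) = a ^ 4 := by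
      rw [← Real.rpow_add ha, ← Real.rpow_natCast]; norm_num
    calc min (a ^ (3 - θ) / (q * m ^ 2)) (q * a ^ (-θ) / m) * a ^ (1 + θ)
        ≤ a ^ (3 - θ) / (q * m ^ 2) * a ^ (1 + θ) := by gcongr; exact min_le_left _ _
      _ = a ^ 4 / (q * m ^ 2) := by rw [div_mul_eq_mul_div, hrpow]
      _ ≤ 4 * q * (K * f * a ^ (1 + θ)) * m / (q * m ^ 2) := by
        gcongr
        exact h.trans (by gcongr)
      _ = 4 * (K * f) * a ^ (1 + θ) / m := by field_simp
      _ ≤ 4 * (K * f) * a ^ (1 + θ) := div_le_self (by positivity) hm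

theorem stmt_5_general (p : ℕ) (hp : p.Prime)
    (G : Finset (ZMod p))
    (hG0 : (0 : ZMod p) ∉ G)
    (g h : ZMod p → ZMod p)
    (hg : ∀ x ∈ G, g x ≠ 0)
    (m : ℕ)
    (hm : m = (G.image fun x => g x * h x).sup
      fun t => (G.filter fun x => g x * h x = t).card)
    (θ K : ℝ) (hθ : 0 < θ) (hK : 0 < K)
    (A : Finset (ZMod p)) (hA : A ⊆ G)
    (hAA : ((A * A).card : ℝ) ≤ K * (A.card : ℝ) ^ ((1 : ℝ) + θ)) :
    ((Finset.image₂ (fun x y => g x * (h x + y)) A A).card : ℝ) ≥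
      (1 / (8 * K)) * min ((A.card : ℝ) ^ ((3 : ℝ) - θ) / ((p : ℝ) * (m : ℝ) ^ 2))
        ((p : ℝ) * (A.card : ℝ) ^ (-θ) / (m : ℝ)) := by
  have := Fact.mk hp
  rcases A.eq_empty_or_nonempty with rfl | hAne
  · have hmin : min ((0 : ℝ) ^ (3 - θ) / (p * m ^ 2)) 0 ≤ 0 := min_le_right _ _
    simpa [Real.zero_rpow (neg_ne_zero.2 hθ.ne')] using
      mul_nonpos_of_nonneg_of_nonpos (by positivity : 0 ≤ 1 / (8 * K)) hmin
  have hfiber (x : ZMod p) (hx : x ∈ A) : #{y ∈ A | g y * h y = g x * h x} ≤ m :=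
    hm ▸ (card_le_card (filter_subset_filter _ hA)).trans
      (le_sup (f := fun t => #{y ∈ G | g y * h y = t}) (mem_image_of_mem _ (hA hx)))
  obtain ⟨x, hx⟩ := hAne
  have hm1 : 1 ≤ m :=
    (card_pos.2 ⟨x, mem_filter.2 ⟨hx, rfl⟩⟩ : 0 < #{y ∈ A | g y * h y = g x * h x}).trans_le
      (hfiber x hx)
  have hdichotomy := card_image₂_dichotomy g h ⟨x, hx⟩ (fun h0 => hG0 (hA h0))
    (fun x hx => hg x (hA hx)) hfiber
  rw [ZMod.card] at hdichotomy
  exact one_div_mul_min_le (by exact_mod_cast card_pos.2 ⟨x, hx⟩) (by exact_mod_cast hp.pos)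
    (by exact_mod_cast hm1) hK (Nat.cast_nonneg _) hAA hdichotomy

/-- Corollary to Theorem 1: if `|A·A| ≤ K·|A|^{1+θ}`, then with
`f(x,y) = g(x)(h(x)+y)` and `m = μ(g·h)` one has
`|f(A,A)| ≥ (1/(8K))·min(|A|^{3−θ}/(p m²), p·|A|^{−θ}/m)`. -/
theorem stmt_5 (p : ℕ) (hp : p.Prime)
    (G : Finset (ZMod p))
    (hG0 : (0 : ZMod p) ∉ G) (hG1 : (1 : ZMod p) ∈ G)
    (hGmul : ∀ x ∈ G, ∀ y ∈ G, x * y ∈ G) (hGinv : ∀ x ∈ G, x⁻¹ ∈ G)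
    (g h : ZMod p → ZMod p)
    (hg : ∀ x ∈ G, g x ≠ 0) (hh : ∀ x ∈ G, h x ≠ 0)
    (m : ℕ)
    (hm : m = (G.image fun x => g x * h x).sup
      fun t => (G.filter fun x => g x * h x = t).card)
    (θ K : ℝ) (hθ : 0 < θ) (hK : 0 < K)
    (A : Finset (ZMod p)) (hA : A ⊆ G)
    (hAA : ((A * A).card : ℝ) ≤ K * (A.card : ℝ) ^ ((1 : ℝ) + θ)) :
    ((Finset.image₂ (fun x y => g x * (h x + y)) A A).card : ℝ) ≥
      (1 / (8 * K)) * min ((A.card : ℝ) ^ ((3 : ℝ) - θ) / ((p : ℝ) * (m : ℝ) ^ 2))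
        ((p : ℝ) * (A.card : ℝ) ^ (-θ) / (m : ℝ)) :=
  stmt_5_general p hp G hG0 g h hg m hm θ K hθ hK A hA hAA
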